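/- arXiv:1504.03275 — 2 statements merged into one kernel-verified Lean document; each statement's English description precedes it below -/
import Mathlib

section
/- Let n ≥ 1 be an integer, θ ∈ (0,1), c ≥ 1 an integer, F a finite family of nonempty subsets of {1,…,n}, and π : F → ℝ with π(S) > 0 for all S ∈ F. Suppose that for every v ∈ {1,…,n} the singleton {v} belongs to F. Then the minimizer of cost_θ over the standard simplex is unique: if p and q are schedules with cost_θ(p) = cost_θ(q) = min over all schedules of cost_θ, then p = q. -/
/-!
The function `x ↦ 1 - θ (1 - x)^c` is positive, concave and strictly increasing on `[0, 1]`,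
so its inverse is strictly convex there. Hence `cost_θ`, a positive combination of this inverse
evaluated at the linear forms `p ↦ p(S)`, is convex on the simplex, and the singleton terms make
it strictly convex: two distinct schedules differ at some coordinate `v`, where the term of `{v}`
is strict. A strictly convex function has at most one minimizer.
-/

open Set

section Kernel

variable {θ : ℝ} {c : ℕ}

lemma concaveOn_one_sub_mul_one_sub_pow (hθ : 0 ≤ θ) :
    ConcaveOn ℝ (Iic 1) fun x : ℝ => 1 - θ * (1 - x) ^ c := by
  refine ⟨convex_Iic 1, fun x hx y hy a b ha hb hab => ?_⟩
  have hpow := (convexOn_pow c).2 (mem_Ici.2 (sub_nonneg.2 hx)) (mem_Ici.2 (sub_nonneg.2 hy))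
    ha hb hab
  have hlin : 1 - (a • x + b • y) = a • (1 - x) + b • (1 - y) := by
    simp only [smul_eq_mul]; linear_combination -hab
  simp only [smul_eq_mul] at hpow hlin ⊢
  rw [hlin]
  nlinarith

lemma strictMonoOn_one_sub_mul_one_sub_pow (hθ : 0 < θ) (hc : c ≠ 0) :
    StrictMonoOn (fun x : ℝ => 1 - θ * (1 - x) ^ c) (Iic 1) := fun x _ y hy hxy => by
  have := pow_lt_pow_left₀ (sub_lt_sub_left hxy 1) (sub_nonneg.2 (mem_Iic.1 hy)) hc
  simp only
  nlinarith

lemma one_sub_mul_one_sub_pow_pos (hθ : θ < 1) {x : ℝ} (hx : x ∈ Icc 0 1) :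
    0 < 1 - θ * (1 - x) ^ c := by
  have : (1 - x) ^ c ≤ 1 := pow_le_one₀ (by linarith [hx.2]) (by linarith [hx.1])
  have h0 := pow_nonneg (sub_nonneg.2 hx.2) c
  rcases le_total 0 θ with hθ0 | hθ0 <;> nlinarith

lemma strictConvexOn_inv_one_sub_mul_one_sub_pow (hθ : θ ∈ Ioo 0 1) (hc : c ≠ 0) :
    StrictConvexOn ℝ (Icc 0 1) fun x : ℝ => (1 - θ * (1 - x) ^ c)⁻¹ := by
  set h : ℝ → ℝ := fun x => 1 - θ * (1 - x) ^ c
  have himage : h '' Icc 0 1 ⊆ Ioi 0 := by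
    rintro _ ⟨x, hx, rfl⟩; exact one_sub_mul_one_sub_pow_pos hθ.2 hx
  have hinv : StrictConvexOn ℝ (Ioi 0) fun t : ℝ => t⁻¹ := by
    simpa using strictConvexOn_zpow (m := -1) (by norm_num) (by norm_num)
  refine StrictConvexOn.comp_concaveOn (f := h) (g := fun t : ℝ => t⁻¹)
    (hinv.subset himage ((convex_Icc 0 1).isPreconnected.image h (by fun_prop)).convex)
    ((concaveOn_one_sub_mul_one_sub_pow (c := c) hθ.1.le).subset Icc_subset_Iic_self
      (convex_Icc 0 1))
    (strictAntiOn_inv_pos.mono himage).antitoneOn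
    ((strictMonoOn_one_sub_mul_one_sub_pow hθ.1 hc).mono Icc_subset_Iic_self).injOn

end Kernel

lemma sum_mem_Icc_of_mem_stdSimplex {ι : Type*} [Fintype ι] {p : ι → ℝ}
    (hp : p ∈ stdSimplex ℝ ι) (S : Finset ι) : ∑ i ∈ S, p i ∈ Icc 0 1 :=
  ⟨Finset.sum_nonneg fun i _ => hp.1 i,
    hp.2 ▸ Finset.sum_le_sum_of_subset_of_nonneg S.subset_univ fun i _ _ => hp.1 i⟩

lemma StrictConvexOn.sum_comp_sum_of_singleton_mem {ι : Type*} [Fintype ι] {φ : ℝ → ℝ}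
    (hφ : StrictConvexOn ℝ (Icc 0 1) φ) {F : Finset (Finset ι)} {w : Finset ι → ℝ}
    (hw : ∀ S ∈ F, 0 < w S) (hsingle : ∀ v, {v} ∈ F) :
    StrictConvexOn ℝ (stdSimplex ℝ ι) fun p => ∑ S ∈ F, w S * φ (∑ i ∈ S, p i) := by
  refine ⟨convex_stdSimplex ℝ ι, fun p hp q hq hpq a b ha hb hab => ?_⟩
  have hsum (S : Finset ι) :
      ∑ i ∈ S, (a * p i + b * q i) = a * ∑ i ∈ S, p i + b * ∑ i ∈ S, q i := by
    rw [Finset.sum_add_distrib, Finset.mul_sum, Finset.mul_sum]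
  have hp' := sum_mem_Icc_of_mem_stdSimplex hp
  have hq' := sum_mem_Icc_of_mem_stdSimplex hq
  obtain ⟨v, hv⟩ := Function.ne_iff.1 hpq
  simp only [Pi.add_apply, Pi.smul_apply, smul_eq_mul, hsum]
  rw [Finset.mul_sum, Finset.mul_sum, ← Finset.sum_add_distrib]
  refine Finset.sum_lt_sum (fun S hS => ?_) ⟨{v}, hsingle v, ?_⟩
  · have := (hφ.convexOn.smul (hw S hS).le).2 (hp' S) (hq' S) ha.le hb.le hab
    simp only [smul_eq_mul] at this
    linarith
  · have := hφ.2 (hp' {v}) (hq' {v}) (by simpa using hv) ha hb hab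
    simp only [smul_eq_mul] at this
    nlinarith [mul_lt_mul_of_pos_left this (hw _ (hsingle v))]

theorem stmt6_general (n : ℕ) (θ : ℝ) (hθ : θ ∈ Set.Ioo (0 : ℝ) 1)
    (c : ℕ) (hc : 1 ≤ c) (F : Finset (Finset (Fin n)))
    (π : Finset (Fin n) → ℝ) (hπ : ∀ S ∈ F, 0 < π S)
    (hsingle : ∀ v : Fin n, {v} ∈ F)
    (cost : (Fin n → ℝ) → ℝ)
    (hcost : ∀ p, cost p = ∑ S ∈ F, π S / (1 - θ * (1 - ∑ i ∈ S, p i) ^ c))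
    (p q : Fin n → ℝ) (hp : p ∈ stdSimplex ℝ (Fin n)) (hq : q ∈ stdSimplex ℝ (Fin n))
    (hpmin : ∀ r ∈ stdSimplex ℝ (Fin n), cost p ≤ cost r)
    (hqmin : ∀ r ∈ stdSimplex ℝ (Fin n), cost q ≤ cost r) :
    p = q := by
  have hcost' : cost = fun r => ∑ S ∈ F, π S * (1 - θ * (1 - ∑ i ∈ S, r i) ^ c)⁻¹ :=
    funext fun r => by simp only [hcost, div_eq_mul_inv]
  have hconv : StrictConvexOn ℝ (stdSimplex ℝ (Fin n)) cost := hcost' ▸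
    (strictConvexOn_inv_one_sub_mul_one_sub_pow hθ (by omega)).sum_comp_sum_of_singleton_mem
      hπ hsingle
  exact hconv.eq_of_isMinOn (isMinOn_iff.2 hpmin) (isMinOn_iff.2 hqmin) hp hq

/-- If every singleton `{v}` belongs to the family `F`, then the
minimizer of `cost_θ` over the standard simplex is unique: any two schedules that
both attain the minimum cost over all schedules are equal. -/
theorem stmt6 (n : ℕ) (hn : 1 ≤ n) (θ : ℝ) (hθ : θ ∈ Set.Ioo (0 : ℝ) 1)
    (c : ℕ) (hc : 1 ≤ c) (F : Finset (Finset (Fin n)))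
    (hF : ∀ S ∈ F, S.Nonempty)
    (π : Finset (Fin n) → ℝ) (hπ : ∀ S ∈ F, 0 < π S)
    (hsingle : ∀ v : Fin n, {v} ∈ F)
    (cost : (Fin n → ℝ) → ℝ)
    (hcost : ∀ p, cost p = ∑ S ∈ F, π S / (1 - θ * (1 - ∑ i ∈ S, p i) ^ c))
    (p q : Fin n → ℝ) (hp : p ∈ stdSimplex ℝ (Fin n)) (hq : q ∈ stdSimplex ℝ (Fin n))
    (hpmin : ∀ r ∈ stdSimplex ℝ (Fin n), cost p ≤ cost r)
    (hqmin : ∀ r ∈ stdSimplex ℝ (Fin n), cost q ≤ cost r) :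
    p = q :=
  stmt6_general n θ hθ c hc F π hπ hsingle cost hcost p q hp hq hpmin hqmin
end

section
/- Let n ≥ 1 be an integer, θ ∈ (0,1), c ≥ 1 an integer, and let 𝒮 = (S_1, …, S_ℓ) be a finite list of ℓ ≥ 1 nonempty subsets of {1,…,n}. The function cost_θ(p,𝒮) = (1/ℓ)·Σ_{j=1}^ℓ 1/(1 − θ(1 − p(S_j))^c) is convex on the standard simplex {p ∈ ℝ^n : p_i ≥ 0 for all i, Σ_{i=1}^n p_i = 1}. -/
open Set

lemma inv_convex_aux {u v a b : ℝ} (hu : 0 < u) (hv : 0 < v) (ha : 0 ≤ a) (hb : 0 ≤ b)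
    (hab : a + b = 1) : (a * u + b * v)⁻¹ ≤ a * u⁻¹ + b * v⁻¹ := by
  have h := (convexOn_zpow (𝕜 := ℝ) (-1)).2 (mem_Ioi.mpr hu) (mem_Ioi.mpr hv) ha hb hab
  simpa [smul_eq_mul, zpow_neg, zpow_one] using h

lemma gconv (θ : ℝ) (hθ : θ ∈ Set.Ioo (0 : ℝ) 1) (c : ℕ) :
    ConvexOn ℝ (Set.Icc (0 : ℝ) 1) (fun u => 1 / (1 - θ * u ^ c)) := by
  obtain ⟨hθ0, hθ1⟩ := hθ
  have key : ∀ u : ℝ, u ∈ Icc (0:ℝ) 1 → θ * u ^ c ≤ θ := by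
    intro u hu
    have : u ^ c ≤ 1 := pow_le_one₀ hu.1 hu.2
    nlinarith
  have keypos : ∀ u : ℝ, u ∈ Icc (0:ℝ) 1 → 0 < 1 - θ * u ^ c := by
    intro u hu; have := key u hu; linarith
  have keynn : ∀ u : ℝ, u ∈ Icc (0:ℝ) 1 → 0 ≤ θ * u ^ c := by
    intro u hu; exact mul_nonneg hθ0.le (pow_nonneg hu.1 c)
  refine ⟨convex_Icc 0 1, ?_⟩
  intro x hx y hy a b ha hb hab
  simp only [smul_eq_mul]
  have hz : a * x + b * y ∈ Icc (0:ℝ) 1 := (convex_Icc (0:ℝ) 1) hx hy ha hb hab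
  have hFconv : θ * (a * x + b * y) ^ c ≤ a * (θ * x ^ c) + b * (θ * y ^ c) := by
    have h := ((convexOn_pow (𝕜 := ℝ) c).smul hθ0.le).2
      (mem_Ici.mpr hx.1) (mem_Ici.mpr hy.1) ha hb hab
    simp only [smul_eq_mul] at h
    exact h
  set Fx := θ * x ^ c with hFx
  set Fy := θ * y ^ c with hFy
  have hFxθ := key x hx
  have hFyθ := key y hy
  have hpx : 0 < 1 - Fx := keypos x hx
  have hpy : 0 < 1 - Fy := keypos y hy
  have hsum : 1 - (a * Fx + b * Fy) = a * (1 - Fx) + b * (1 - Fy) := by ring_nf; linarith [hab]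
  have hpz : (0:ℝ) < a * (1 - Fx) + b * (1 - Fy) := by
    rcases eq_or_lt_of_le ha with h | h
    · have hb1 : b = 1 := by linarith
      simpa [← h, hb1] using hpy
    · have : 0 < a * (1 - Fx) := mul_pos h hpx
      nlinarith [mul_nonneg hb hpy.le]
  have step1 : 1 / (1 - θ * (a * x + b * y) ^ c) ≤ 1 / (1 - (a * Fx + b * Fy)) := by
    apply one_div_le_one_div_of_le
    · rw [hsum]; exact hpz
    · linarith
  have step2 : 1 / (1 - (a * Fx + b * Fy)) ≤ a * (1 / (1 - Fx)) + b * (1 / (1 - Fy)) := by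
    rw [hsum]
    simpa [one_div] using inv_convex_aux hpx hpy ha hb hab
  linarith

lemma termconv (n : ℕ) (θ : ℝ) (hθ : θ ∈ Set.Ioo (0 : ℝ) 1) (c : ℕ) (S : Finset (Fin n)) :
    ConvexOn ℝ (stdSimplex ℝ (Fin n))
      (fun p : Fin n → ℝ => 1 / (1 - θ * (1 - ∑ i ∈ S, p i) ^ c)) := by
  have hmem : ∀ p ∈ stdSimplex ℝ (Fin n), (1 - ∑ i ∈ S, p i) ∈ Icc (0:ℝ) 1 := by
    intro p hp
    have h1 : ∑ i ∈ S, p i ≤ ∑ i : Fin n, p i :=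
      Finset.sum_le_sum_of_subset_of_nonneg (Finset.subset_univ S)
        (fun i _ _ => hp.1 i)
    have h2 : 0 ≤ ∑ i ∈ S, p i := Finset.sum_nonneg fun i _ => hp.1 i
    rw [hp.2] at h1
    constructor <;> simp <;> linarith
  refine ⟨convex_stdSimplex ℝ (Fin n), ?_⟩
  intro p hp q hq a b ha hb hab
  have h := (gconv θ hθ c).2 (hmem p hp) (hmem q hq) ha hb hab
  simp only [smul_eq_mul] at h
  dsimp only [Pi.add_apply, Pi.smul_apply, smul_eq_mul]
  have key : (∑ i ∈ S, (a * p i + b * q i))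
      = a * (∑ i ∈ S, p i) + b * (∑ i ∈ S, q i) := by
    simp [Finset.sum_add_distrib, Finset.mul_sum]
  rw [key, show 1 - (a * (∑ i ∈ S, p i) + b * (∑ i ∈ S, q i))
      = a * (1 - ∑ i ∈ S, p i) + b * (1 - ∑ i ∈ S, q i) by ring_nf; linarith]
  exact h

/-- For a sample `𝒮 = (S_1,…,S_ℓ)` of `ℓ ≥ 1` nonempty subsets of
`{1,…,n}`, the sample cost `cost_θ(p,𝒮) = (1/ℓ)·Σ_{j=1}^ℓ 1/(1 − θ(1 − p(S_j))^c)`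
is convex on the standard simplex. -/
theorem stmt16 (n : ℕ) (hn : 1 ≤ n) (θ : ℝ) (hθ : θ ∈ Set.Ioo (0 : ℝ) 1)
    (c : ℕ) (hc : 1 ≤ c) (𝒮 : List (Finset (Fin n)))
    (hlen : 1 ≤ 𝒮.length) (hne : ∀ S ∈ 𝒮, S.Nonempty) :
    ConvexOn ℝ (stdSimplex ℝ (Fin n))
      (fun p : Fin n → ℝ =>
        (1 / (𝒮.length : ℝ)) *
          (𝒮.map (fun S => 1 / (1 - θ * (1 - ∑ i ∈ S, p i) ^ c))).sum) := by
  have hsum : ∀ L : List (Finset (Fin n)),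
      ConvexOn ℝ (stdSimplex ℝ (Fin n))
        (fun p : Fin n → ℝ =>
          (L.map (fun S => 1 / (1 - θ * (1 - ∑ i ∈ S, p i) ^ c))).sum) := by
    intro L
    induction L with
    | nil => simpa using convexOn_const (0:ℝ) (convex_stdSimplex ℝ (Fin n))
    | cons S T ih =>
        simpa [List.map_cons, List.sum_cons, Pi.add_def] using (termconv n θ hθ c S).add ih
  have h := (hsum 𝒮).smul (c := 1 / (𝒮.length : ℝ)) (by positivity)
  simpa [smul_eq_mul] using h
end
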